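/- arXiv:1210.1461 — 2 statements merged into one kernel-verified Lean document; each statement's English description precedes it below -/
import Mathlib

section
/- Let A be an m×n real matrix and R an r×n real matrix with rank(A R⁺ R) = rank(R) = ρ. If v_j is a right singular vector of A R⁺ R corresponding to a nonzero singular value, then A R⁺ R v_j = A v_j, where R⁺ denotes the Moore-Penrose pseudoinverse of R. -/
open Matrix BigOperators

def IsMPInv {m n : Type*} [Fintype m] [Fintype n] (A : Matrix m n ℝ) (B : Matrix n m ℝ) : Prop :=
  A * B * A = A ∧ B * A * B = B ∧ (A * B)ᵀ = A * B ∧ (B * A)ᵀ = B * A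

-- The Moore-Penrose pseudoinverse (it exists and is unique for real matrices).
open Classical in
noncomputable def mpinv {m n : Type*} [Fintype m] [Fintype n] (A : Matrix m n ℝ) : Matrix n m ℝ :=
  if h : ∃ B, IsMPInv A B then h.choose else 0

/-- Squared Frobenius norm. -/
def frobSq {m n : Type*} [Fintype m] [Fintype n] (A : Matrix m n ℝ) : ℝ :=
  ∑ i, ∑ j, (A i j) ^ 2

/-- Frobenius norm. -/
noncomputable def frob {m n : Type*} [Fintype m] [Fintype n] (A : Matrix m n ℝ) : ℝ :=
  Real.sqrt (frobSq A)

/-!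
`P := R⁺ R` is a symmetric idempotent. If `(A P)ᵀ (A P) v = σ² v` with `σ ≠ 0`, then
`v = σ⁻² P Aᵀ A P v` lies in the range of `P`, so `P v = v` and hence `A P v = A v`.
-/

namespace Matrix

variable {m n K : Type*} [Fintype m] [Fintype n] [Field K]

theorem mulVec_eq_self_of_gram_mul_mulVec_eq_smul {P : Matrix n n K} (hsymm : Pᵀ = P)
    (hidem : IsIdempotentElem P) (A : Matrix m n K) {v : n → K} {c : K} (hc : c ≠ 0)
    (h : ((A * P)ᵀ * (A * P)) *ᵥ v = c • v) : P *ᵥ v = v := by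
  have hgram : P * ((A * P)ᵀ * (A * P)) = (A * P)ᵀ * (A * P) := by
    rw [transpose_mul, hsymm, ← Matrix.mul_assoc, ← Matrix.mul_assoc P P, hidem.eq]
  have hPv : c • P *ᵥ v = c • v := by
    rw [← mulVec_smul, ← h, mulVec_mulVec, hgram]
  exact smul_right_injective _ hc hPv

theorem mul_mulVec_eq_mulVec_of_gram_mul_mulVec_eq_smul {P : Matrix n n K} (hsymm : Pᵀ = P)
    (hidem : IsIdempotentElem P) (A : Matrix m n K) {v : n → K} {c : K} (hc : c ≠ 0)
    (h : ((A * P)ᵀ * (A * P)) *ᵥ v = c • v) : (A * P) *ᵥ v = A *ᵥ v := by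
  rw [← mulVec_mulVec, mulVec_eq_self_of_gram_mul_mulVec_eq_smul hsymm hidem A hc h]

end Matrix

section Pseudoinverse

variable {m n : Type*} [Fintype m] [Fintype n]

theorem IsMPInv.isIdempotentElem_mul_self {A : Matrix m n ℝ} {B : Matrix n m ℝ}
    (h : IsMPInv A B) : IsIdempotentElem (B * A) := by
  rw [IsIdempotentElem, Matrix.mul_assoc, ← Matrix.mul_assoc A, h.1]

theorem isMPInv_mpinv_or_mpinv_eq_zero (A : Matrix m n ℝ) : IsMPInv A (mpinv A) ∨ mpinv A = 0 := by
  by_cases h : ∃ B, IsMPInv A B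
  · left
    simpa [mpinv, h] using h.choose_spec
  · right
    simp [mpinv, h]

theorem transpose_mpinv_mul (A : Matrix m n ℝ) : (mpinv A * A)ᵀ = mpinv A * A := by
  rcases isMPInv_mpinv_or_mpinv_eq_zero A with h | h
  · exact h.2.2.2
  · simp [h]

theorem isIdempotentElem_mpinv_mul (A : Matrix m n ℝ) : IsIdempotentElem (mpinv A * A) := by
  rcases isMPInv_mpinv_or_mpinv_eq_zero A with h | h
  · exact h.isIdempotentElem_mul_self
  · simp [h, IsIdempotentElem]

end Pseudoinverse

theorem stmt0_general {m n r : ℕ} (A : Matrix (Fin m) (Fin n) ℝ) (R : Matrix (Fin r) (Fin n) ℝ)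
    (v : Fin n → ℝ) (σ : ℝ) (hσ : 0 < σ)
    (hsing : ((A * mpinv R * R)ᵀ * (A * mpinv R * R)) *ᵥ v = (σ ^ 2) • v) :
    (A * mpinv R * R) *ᵥ v = A *ᵥ v := by
  rw [Matrix.mul_assoc] at hsing ⊢
  exact mul_mulVec_eq_mulVec_of_gram_mul_mulVec_eq_smul (transpose_mpinv_mul R)
    (isIdempotentElem_mpinv_mul R) A (pow_ne_zero 2 hσ.ne') hsing

/-- If `rank (A R⁺ R) = rank R = ρ` and `v` is a right singular vector of
`A R⁺ R` corresponding to a nonzero singular value `σ` (i.e. a unit vector with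
`(A R⁺ R)ᵀ (A R⁺ R) v = σ² v`), then `A R⁺ R v = A v`. -/
theorem stmt0 {m n r ρ : ℕ} (A : Matrix (Fin m) (Fin n) ℝ) (R : Matrix (Fin r) (Fin n) ℝ)
    (hrankAR : (A * mpinv R * R).rank = ρ) (hrankR : R.rank = ρ)
    (v : Fin n → ℝ) (σ : ℝ) (hσ : 0 < σ)
    (hunit : ∑ t, (v t) ^ 2 = 1)
    (hsing : ((A * mpinv R * R)ᵀ * (A * mpinv R * R)) *ᵥ v = (σ ^ 2) • v) :
    (A * mpinv R * R) *ᵥ v = A *ᵥ v :=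
  stmt0_general A R v σ hσ hsing
end

section
/- Let A ∈ ℝ^{m×n}, let C consist of columns of A, and let R consist of rows of A. With U = C⁺ A R⁺, the matrix C U R equals C C⁺ A R⁺ R, i.e., the double orthogonal projection of A onto the column space of C and the row space of R. Moreover ‖A − C U R‖_F = min_X ‖A − C X R‖_F over all X ∈ ℝ^{c×r}. -/
/-!
A real matrix `M = AᵀA` is symmetric, so the functional calculus gives it a symmetric
generalized inverse `G = M⁺` commuting with `M` (apply `x ↦ x⁻¹` to the spectrum, with
`0⁻¹ = 0`), and `G Aᵀ` is then a Moore-Penrose inverse of `A`. Hence `P = C C⁺` and `Q = R⁺ R`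
are symmetric idempotents, and `X ↦ P X Q` is the orthogonal projection, for the trace inner
product, onto the matrices of the form `C X R`; the best approximation of `A` by such matrices
is therefore `P A Q = C (C⁺ A R⁺) R`.
-/

open Matrix BigOperators

theorem Matrix.IsHermitian.exists_symm_gInv_commute {n : Type*} [Fintype n] [DecidableEq n]
    {M : Matrix n n ℝ} (hM : M.IsHermitian) :
    ∃ G : Matrix n n ℝ, M * G * M = M ∧ Gᵀ = G ∧ Commute M G := by
  have hsa : IsSelfAdjoint M := hM
  have hM_eq : cfc (fun x : ℝ => x) M = M := cfc_id' ℝ M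
  have hcfc_mul₃ (f g h : ℝ → ℝ) :
      cfc f M * cfc g M * cfc h M = cfc (fun x => f x * g x * h x) M := by
    have hcont (f : ℝ → ℝ) : ContinuousOn f (spectrum ℝ M) :=
      M.finite_real_spectrum.continuousOn f
    rw [cfc_mul _ _ _ (hcont _) (hcont _), cfc_mul _ _ _ (hcont _) (hcont _)]
  refine ⟨cfc (·⁻¹ : ℝ → ℝ) M, ?_, ?_, ?_⟩
  · simpa only [hM_eq, mul_inv_mul_cancel] using hcfc_mul₃ (fun x => x) (·⁻¹) (fun x => x)
  · have : IsSelfAdjoint (cfc (·⁻¹ : ℝ → ℝ) M) := cfc_predicate _ M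
    rwa [isSelfAdjoint_iff, star_eq_conjTranspose, conjTranspose_eq_transpose_of_trivial] at this
  · simpa only [hM_eq] using cfc_commute_cfc (fun x : ℝ => x) (·⁻¹) M

theorem exists_isMPInv {m n : Type*} [Fintype m] [Fintype n] (A : Matrix m n ℝ) :
    ∃ B, IsMPInv A B := by
  classical
  have hM : (Aᵀ * A).IsHermitian := by
    simpa only [conjTranspose_eq_transpose_of_trivial] using isHermitian_conjTranspose_mul_self A
  obtain ⟨G, hMGM, hGt, hcomm⟩ := hM.exists_symm_gInv_commute
  have hGAt : Aᵀ * A * G * Aᵀ = Aᵀ := by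
    have h : (Aᵀ * A * G - 1) * (Aᵀ * A) = 0 := by
      rw [Matrix.sub_mul, hMGM, Matrix.one_mul, sub_self]
    rw [← conjTranspose_eq_transpose_of_trivial, mul_conjTranspose_mul_self_eq_zero,
      Matrix.sub_mul, Matrix.one_mul, sub_eq_zero] at h
    exact h
  have hAG : A * G * (Aᵀ * A) = A := by
    simpa only [transpose_mul, transpose_transpose, hGt, Matrix.mul_assoc] using
      congrArg transpose hGAt
  refine ⟨G * Aᵀ, ?_, ?_, ?_, ?_⟩
  · simpa only [Matrix.mul_assoc] using hAG
  · conv_rhs => rw [← hGAt]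
    simp only [Matrix.mul_assoc]
  · simp only [transpose_mul, transpose_transpose, hGt, Matrix.mul_assoc]
  · rw [Matrix.mul_assoc, transpose_mul, transpose_mul, transpose_transpose, hGt, hcomm.eq]

theorem mpinv_isMPInv {m n : Type*} [Fintype m] [Fintype n] (A : Matrix m n ℝ) :
    IsMPInv A (mpinv A) := by
  have h := exists_isMPInv A
  rw [mpinv, dif_pos h]
  exact h.choose_spec

theorem IsMPInv.isIdempotentElem_mul {m n : Type*} [Fintype m] [Fintype n]
    {A : Matrix m n ℝ} {B : Matrix n m ℝ} (h : IsMPInv A B) : IsIdempotentElem (A * B) := by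
  rw [IsIdempotentElem, ← Matrix.mul_assoc, h.1]

theorem IsMPInv.isIdempotentElem_mul_rev {m n : Type*} [Fintype m] [Fintype n]
    {A : Matrix m n ℝ} {B : Matrix n m ℝ} (h : IsMPInv A B) : IsIdempotentElem (B * A) := by
  rw [IsIdempotentElem, ← Matrix.mul_assoc, h.2.1]

section Frobenius

variable {m n : Type*} [Fintype m] [Fintype n]

theorem frobSq_eq_trace (M : Matrix m n ℝ) : frobSq M = trace (M * Mᵀ) := by
  simp [frobSq, trace, mul_apply, sq]

theorem frobSq_nonneg (M : Matrix m n ℝ) : 0 ≤ frobSq M :=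
  Finset.sum_nonneg fun _ _ => Finset.sum_nonneg fun _ _ => sq_nonneg _

theorem frobSq_add (D E : Matrix m n ℝ) :
    frobSq (D + E) = frobSq D + 2 * trace (D * Eᵀ) + frobSq E := by
  have hED : trace (E * Dᵀ) = trace (D * Eᵀ) := by
    rw [← trace_transpose, transpose_mul, transpose_transpose]
  simp only [frobSq_eq_trace, transpose_add, Matrix.add_mul, Matrix.mul_add, trace_add, hED]
  ring

theorem frobSq_le_frobSq_add {D E : Matrix m n ℝ} (h : trace (D * Eᵀ) = 0) :
    frobSq D ≤ frobSq (D + E) := by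
  rw [frobSq_add, h]
  linarith [frobSq_nonneg E]

theorem frobSq_sub_mul_mul_le {P : Matrix m m ℝ} {Q : Matrix n n ℝ}
    (hP : IsIdempotentElem P) (hPt : Pᵀ = P) (hQ : IsIdempotentElem Q) (hQt : Qᵀ = Q)
    (A Y : Matrix m n ℝ) (hY : P * Y * Q = Y) :
    frobSq (A - P * A * Q) ≤ frobSq (A - Y) := by
  have hsplit : A - Y = (A - P * A * Q) + P * (A - Y) * Q := by
    rw [Matrix.mul_sub, Matrix.sub_mul, hY]; abel
  have hkill : P * (A - P * A * Q) * Q = 0 := by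
    rw [Matrix.mul_sub, Matrix.sub_mul, ← Matrix.mul_assoc, ← Matrix.mul_assoc, hP.eq,
      Matrix.mul_assoc _ Q Q, hQ.eq, sub_self]
  have horth : trace ((A - P * A * Q) * (P * (A - Y) * Q)ᵀ) = 0 := by
    rw [transpose_mul, transpose_mul, hPt, hQt, ← Matrix.mul_assoc, ← Matrix.mul_assoc,
      trace_mul_comm, ← Matrix.mul_assoc, ← Matrix.mul_assoc, hkill, Matrix.zero_mul, trace_zero]
  rw [hsplit]
  exact frobSq_le_frobSq_add horth

end Frobenius

theorem stmt8_general {m n c r : ℕ} (A : Matrix (Fin m) (Fin n) ℝ)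
    (C : Matrix (Fin m) (Fin c) ℝ) (R : Matrix (Fin r) (Fin n) ℝ)
    (U : Matrix (Fin c) (Fin r) ℝ) (hU : U = mpinv C * A * mpinv R) :
    C * U * R = C * mpinv C * A * (mpinv R * R) ∧
    (∀ X : Matrix (Fin c) (Fin r) ℝ, frob (A - C * U * R) ≤ frob (A - C * X * R)) := by
  have hCUR : C * U * R = C * mpinv C * A * (mpinv R * R) := by
    simp only [hU, Matrix.mul_assoc]
  refine ⟨hCUR, fun X => ?_⟩
  have hC := mpinv_isMPInv C
  have hR := mpinv_isMPInv R
  have hCXR : C * mpinv C * (C * X * R) * (mpinv R * R) = C * X * R := by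
    calc C * mpinv C * (C * X * R) * (mpinv R * R)
        = (C * mpinv C * C) * X * (R * mpinv R * R) := by simp only [Matrix.mul_assoc]
      _ = C * X * R := by rw [hC.1, hR.1]
  rw [hCUR]
  exact Real.sqrt_le_sqrt <| frobSq_sub_mul_mul_le hC.isIdempotentElem_mul hC.2.2.1
    hR.isIdempotentElem_mul_rev hR.2.2.2 A _ hCXR

/-- With `C` consisting of columns of `A`, `R` consisting of rows of `A`, and
`U = C⁺ A R⁺`, the matrix `C U R` equals the double projection `C C⁺ A R⁺ R`, and
`‖A - C U R‖_F = min_X ‖A - C X R‖_F`. -/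
theorem stmt8 {m n c r : ℕ} (A : Matrix (Fin m) (Fin n) ℝ)
    (C : Matrix (Fin m) (Fin c) ℝ) (R : Matrix (Fin r) (Fin n) ℝ)
    (hC : ∀ j, ∃ i, ∀ t, C t j = A t i)
    (hR : ∀ i, ∃ j, ∀ t, R i t = A j t)
    (U : Matrix (Fin c) (Fin r) ℝ) (hU : U = mpinv C * A * mpinv R) :
    C * U * R = C * mpinv C * A * (mpinv R * R) ∧
    (∀ X : Matrix (Fin c) (Fin r) ℝ, frob (A - C * U * R) ≤ frob (A - C * X * R)) :=
  stmt8_general A C R U hU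
end
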